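/- For every real β, every real y, and every integer n ≥ 0, one has Σ_{p+q=n, p,q≥0} c_p · P_q(y − β) = H̃_n(y + β). -/

import Mathlib

/-!
Generating functions: `H̃_n(x)`, `P_n(x)` and `c_n` are the coefficients of `tⁿ` in
`exp(2xt − t²)`, `exp(2xt + t²)` and `exp(4βt − 2t²)`, the last two obtained from the first by
the substitutions `t ↦ it` and `t ↦ √2 t`. The sum over `p + q = n` is the coefficient of `tⁿ`
in `exp(4βt − 2t²) · exp(2(y − β)t + t²) = exp(2(y + β)t − t²)`.
-/

/-- Physicists' Hermite polynomial `H_n` at a real argument: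
`H_n(x) = n! · Σ_{m=0}^{⌊n/2⌋} (−1)^m (2x)^{n−2m} / (m!(n−2m)!)`. -/
noncomputable def HR (n : ℕ) (x : ℝ) : ℝ :=
  (n.factorial : ℝ) * ∑ m ∈ Finset.range (n / 2 + 1),
    (-1 : ℝ) ^ m * (2 * x) ^ (n - 2 * m) / ((m.factorial : ℝ) * ((n - 2 * m).factorial : ℝ))

/-- Normalized Hermite polynomial `H̃_n(x) = H_n(x)/n!` at a real argument. -/
noncomputable def HtR (n : ℕ) (x : ℝ) : ℝ := HR n x / (n.factorial : ℝ)

/-- Complex normalized Hermite polynomial, used to define `P_n`. -/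
noncomputable def HtC (n : ℕ) (x : ℂ) : ℂ :=
  ((n.factorial : ℂ) * ∑ m ∈ Finset.range (n / 2 + 1),
    (-1 : ℂ) ^ m * (2 * x) ^ (n - 2 * m) / ((m.factorial : ℂ) * ((n - 2 * m).factorial : ℂ)))
    / (n.factorial : ℂ)

/-- The real polynomial `P_n`, determined by `P_n(x) = i^{−n}·H̃_n(i x)` (which is real
for real `x`). -/
noncomputable def PR (n : ℕ) (x : ℝ) : ℝ :=
  (Complex.I ^ (-(n : ℤ)) * HtC n (Complex.I * x)).re

/-- `c_k = 2^{k/2}·H̃_k(β√2)`. -/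
noncomputable def cR (β : ℝ) (k : ℕ) : ℝ := Real.sqrt 2 ^ k * HtR k (β * Real.sqrt 2)

/-- `a_k = 2^{k/2}·(−1)^k·P_k(β√2)`. -/
noncomputable def aR (β : ℝ) (k : ℕ) : ℝ := Real.sqrt 2 ^ k * (-1) ^ k * PR k (β * Real.sqrt 2)

open PowerSeries Finset

theorem sum_range_succ_ite_two_dvd {M : Type*} [AddCommMonoid M] (n : ℕ) (f : ℕ → M) :
    ∑ j ∈ range (n + 1), (if 2 ∣ j then f j else 0) = ∑ m ∈ range (n / 2 + 1), f (2 * m) := by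
  rw [← sum_filter]
  refine sum_nbij' (· / 2) (2 * ·) ?_ ?_ ?_ ?_ fun j hj => congrArg f ?_ <;>
    simp only [mem_filter, mem_range, Nat.dvd_iff_mod_eq_zero] at * <;> omega

theorem PowerSeries.rescale_expand_two {R : Type*} [CommRing R] (c : R) (f : PowerSeries R) :
    rescale c (expand 2 two_ne_zero f) = expand 2 two_ne_zero (rescale (c ^ 2) f) := by
  ext n
  simp only [coeff_rescale, coeff_expand]
  split_ifs with h
  · obtain ⟨k, rfl⟩ := h
    rw [Nat.mul_div_cancel_left k two_pos, pow_mul]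
  · rw [mul_zero]

section ExpQuad

variable {A B : Type*} [CommRing A] [Algebra ℚ A] [CommRing B] [Algebra ℚ B]

/-- The formal power series `exp (a X + u X²)`. -/
noncomputable def expQuad (a u : A) : PowerSeries A :=
  expand 2 two_ne_zero (rescale u (exp A)) * rescale a (exp A)

theorem expQuad_mul_expQuad (a b u v : A) :
    expQuad a u * expQuad b v = expQuad (a + b) (u + v) := by
  rw [expQuad, expQuad, mul_mul_mul_comm, ← map_mul, exp_mul_exp_eq_exp_add,
    exp_mul_exp_eq_exp_add, expQuad]

theorem rescale_expQuad (c a u : A) : rescale c (expQuad a u) = expQuad (c * a) (c ^ 2 * u) := by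
  rw [expQuad, map_mul, rescale_rescale, rescale_expand_two, rescale_rescale, expQuad,
    mul_comm a, mul_comm u]

theorem map_expQuad (φ : A →+* B) (a u : A) :
    map φ (expQuad a u) = expQuad (φ a) (φ u) := by
  rw [expQuad, map_mul, map_expand, ← rescale_map, ← rescale_map, map_exp, expQuad]

end ExpQuad

theorem coeff_expQuad {K : Type*} [Field K] [CharZero K] (a u : K) (n : ℕ) :
    coeff n (expQuad a u) = ∑ m ∈ range (n / 2 + 1),
      u ^ m * a ^ (n - 2 * m) / ((m.factorial : K) * ((n - 2 * m).factorial : K)) := by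
  rw [expQuad, coeff_mul, Nat.sum_antidiagonal_eq_sum_range_succ_mk]
  simp only [coeff_expand, coeff_rescale, coeff_exp, ite_mul, zero_mul]
  rw [Nat.succ_eq_add_one, sum_range_succ_ite_two_dvd]
  refine sum_congr rfl fun m _ => ?_
  rw [Nat.mul_div_cancel_left m two_pos]
  simp only [one_div, map_inv₀, map_natCast]
  ring

theorem HtC_eq_coeff (n : ℕ) (z : ℂ) : HtC n z = coeff n (expQuad (2 * z) (-1)) := by
  rw [HtC, mul_div_cancel_left₀ _ (Nat.cast_ne_zero.mpr n.factorial_ne_zero), coeff_expQuad]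

theorem HtR_eq_coeff (n : ℕ) (x : ℝ) : HtR n x = coeff n (expQuad (2 * x) (-1)) := by
  rw [HtR, HR, mul_div_cancel_left₀ _ (Nat.cast_ne_zero.mpr n.factorial_ne_zero), coeff_expQuad]

theorem PR_eq_coeff (n : ℕ) (x : ℝ) : PR n x = coeff n (expQuad (2 * x) 1) := by
  have hrescale : expQuad (2 * (Complex.I * x)) (-1) =
      rescale Complex.I (map Complex.ofRealHom (expQuad (2 * x) 1)) := by
    rw [map_expQuad, rescale_expQuad, Complex.I_sq]
    simp only [Complex.ofRealHom_eq_coe]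
    push_cast
    ring_nf
  rw [PR, HtC_eq_coeff, hrescale, coeff_rescale, coeff_map, zpow_neg, zpow_natCast,
    inv_mul_cancel_left₀ (pow_ne_zero _ Complex.I_ne_zero), Complex.ofRealHom_eq_coe,
    Complex.ofReal_re]

theorem cR_eq_coeff (β : ℝ) (k : ℕ) : cR β k = coeff k (expQuad (4 * β) (-2)) := by
  have h2 : Real.sqrt 2 ^ 2 = 2 := Real.sq_sqrt zero_le_two
  rw [cR, HtR_eq_coeff, ← coeff_rescale, rescale_expQuad, h2]
  congr 2
  · linear_combination (2 * β) * h2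
  · norm_num

/-- `Σ_{p+q=n} c_p · P_q(y − β) = H̃_n(y + β)`. -/
theorem hermite_c_P_sum (β y : ℝ) (n : ℕ) :
    ∑ p ∈ Finset.HasAntidiagonal.antidiagonal n, cR β p.1 * PR p.2 (y - β) = HtR n (y + β) := by
  simp only [cR_eq_coeff, PR_eq_coeff]
  rw [← coeff_mul, expQuad_mul_expQuad, HtR_eq_coeff]
  congr 2 <;> ring
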